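/- arXiv:1808.08499 — 5 statements merged into one kernel-verified Lean document; each statement's English description precedes it below -/
import Mathlib

section
/- Estimate for the first auxiliary functional of the Cattaneo system: set Γ := τ + (1/δ²)(ρ₂ − bρ₁/k + τb₀ρ₃), χ_{0,τ} := (τ − ρ₁/(ρ₃k))(ρ₂ − bρ₁/k) − τρ₁δ²/(ρ₃k), and define J₁(t) = −τρ₂ Re(v ȳ) − (aτρ₁/k) Re(z ū) + (δρ₁Γ/k) Re(θ ū) − (τ/δ)(ρ₂ − bρ₁/k + τb₀ρ₃) Re(v q̄). Then for every ε > 0 there exists a constant C(ε) > 0, depending only on ε and the system parameters, such that for all t ≥ 0: (d/dt)J₁(t) + τk(1−ε)|v|² ≤ τρ₂|y|² + C(ε)ξ⁴|∫₀^∞ g(s)η(t,s)ds|² + χ_{0,τ} Re(iξ ū y) + (1/δ)(χ_{0,τ} + τb₀ρ₃(τ − ρ₁/(ρ₃k))) Re(iξ q ū) + (τ/δ)(ρ₂ − bρ₁/k + τb₀ρ₃) Re(y q̄) + C(ε)|q|². -/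
/-!
Along a solution, the derivative of `J₁` is a real-bilinear expression in the state which, after
substituting the equations of motion, equals `-τk|v|²` plus the terms on the right-hand side plus
two cross terms `τmξ² Re(v ∫gη̄)` and `(Λβ/δ) Re(v q̄)`, where `Λ = ρ₂ - bρ₁/k + τb₀ρ₃`.
Young's inequality absorbs both cross terms into `τkε|v|²`, at the price of `C ξ⁴ |∫gη|²` and
`C |q|²`.
-/

open MeasureTheory Filter Complex ComplexConjugate

theorem two_mul_re_mul_conj_le (A : ℝ) {α : ℝ} (hα : 0 < α) (x y : ℂ) :
    2 * A * (x * conj y).re ≤ α * ‖x‖ ^ 2 + A ^ 2 * ‖y‖ ^ 2 / α := by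
  have hre : A * (x * conj y).re ≤ ‖x‖ * (|A| * ‖y‖) :=
    calc A * (x * conj y).re ≤ |A * (x * conj y).re| := le_abs_self _
      _ ≤ |A| * ‖x * conj y‖ := by rw [abs_mul]; gcongr; exact abs_re_le_norm _
      _ = ‖x‖ * (|A| * ‖y‖) := by rw [norm_mul, norm_conj]; ring
  calc 2 * A * (x * conj y).re ≤ 2 * ‖x‖ * (|A| * ‖y‖) := by linarith
    _ ≤ α * ‖x‖ ^ 2 + α⁻¹ * (|A| * ‖y‖) ^ 2 := two_mul_le_add_mul_sq hα
    _ = α * ‖x‖ ^ 2 + A ^ 2 * ‖y‖ ^ 2 / α := by rw [mul_pow, sq_abs]; ring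

theorem neg_sq_add_re_mul_conj_le {κ ε μ c C : ℝ} (hκ : 0 < κ) (hε : 0 < ε)
    (hμ : μ ^ 2 ≤ 2 * κ * ε * C) (hc : c ^ 2 ≤ 2 * κ * ε * C) (w : ℝ) (V G Q : ℂ) :
    -κ * ‖V‖ ^ 2 + μ * w * (V * conj G).re + c * (V * conj Q).re + κ * (1 - ε) * ‖V‖ ^ 2
      ≤ C * w ^ 2 * ‖G‖ ^ 2 + C * ‖Q‖ ^ 2 := by
  have hκε : 0 < κ * ε := mul_pos hκ hε
  have hG := two_mul_re_mul_conj_le (μ * w) hκε V G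
  have hQ := two_mul_re_mul_conj_le c hκε V Q
  have hμ' : (μ * w) ^ 2 * ‖G‖ ^ 2 / (κ * ε) ≤ 2 * (C * w ^ 2 * ‖G‖ ^ 2) := by
    rw [div_le_iff₀ hκε, mul_pow]
    nlinarith [mul_nonneg (sq_nonneg w) (sq_nonneg ‖G‖)]
  have hc' : c ^ 2 * ‖Q‖ ^ 2 / (κ * ε) ≤ 2 * (C * ‖Q‖ ^ 2) := by
    rw [div_le_iff₀ hκε]
    nlinarith [sq_nonneg ‖Q‖]
  linarith

theorem exists_pos_sq_le_mul {κ : ℝ} (hκ : 0 < κ) (a c : ℝ) :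
    ∃ C > 0, a ^ 2 ≤ κ * C ∧ c ^ 2 ≤ κ * C := by
  refine ⟨(a ^ 2 + c ^ 2) / κ + 1, by positivity, ?_, ?_⟩ <;>
  · rw [mul_add, mul_div_cancel₀ _ hκ.ne']
    nlinarith [sq_nonneg a, sq_nonneg c]

theorem HasDerivAt.re_mul_conj {f g : ℝ → ℂ} {f' g' : ℂ} {t : ℝ} (hf : HasDerivAt f f' t)
    (hg : HasDerivAt g g' t) :
    HasDerivAt (fun r => (f r * conj (g r)).re) (f' * conj (g t) + f t * conj g').re t :=
  reCLM.hasFDerivAt.comp_hasDerivAt t (hf.mul hg.star)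

section CattaneoFunctional

variable (ρ₁ ρ₂ ρ₃ k b δ τ b₀ : ℝ)

/-- `J₁` is real-bilinear in `(V, Z, Θ)` and `(Y, U, Q)`, so its derivative along a curve is the
sum of the two evaluations with one group differentiated. -/
noncomputable def J₁ (V Z Θ Y U Q : ℂ) : ℝ :=
  -(τ*ρ₂) * (V * conj Y).re - ((b - b₀)*τ*ρ₁/k) * (Z * conj U).re
    + (δ*ρ₁*(τ + (1/δ^2)*(ρ₂ - b*ρ₁/k + τ*b₀*ρ₃))/k) * (Θ * conj U).re
    - ((τ/δ)*(ρ₂ - b*ρ₁/k + τ*b₀*ρ₃)) * (V * conj Q).re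

theorem hasDerivAt_J₁ {V Z Θ Y U Q : ℝ → ℂ} {V' Z' Θ' Y' U' Q' : ℂ} {t : ℝ}
    (hV : HasDerivAt V V' t) (hZ : HasDerivAt Z Z' t) (hΘ : HasDerivAt Θ Θ' t)
    (hY : HasDerivAt Y Y' t) (hU : HasDerivAt U U' t) (hQ : HasDerivAt Q Q' t) :
    HasDerivAt (fun r => J₁ ρ₁ ρ₂ ρ₃ k b δ τ b₀ (V r) (Z r) (Θ r) (Y r) (U r) (Q r))
      (J₁ ρ₁ ρ₂ ρ₃ k b δ τ b₀ V' Z' Θ' (Y t) (U t) (Q t)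
        + J₁ ρ₁ ρ₂ ρ₃ k b δ τ b₀ (V t) (Z t) (Θ t) Y' U' Q') t :=
  ((((hV.re_mul_conj hY).const_mul _).sub ((hZ.re_mul_conj hU).const_mul _)).add
      ((hΘ.re_mul_conj hU).const_mul _) |>.sub ((hV.re_mul_conj hQ).const_mul _)).congr_deriv
    (by simp only [J₁, add_re]; ring)

variable {ρ₁ ρ₂ ρ₃ k δ τ}

theorem J₁_deriv_eq (m β ξ : ℝ) (h₁ : ρ₁ ≠ 0) (h₂ : ρ₂ ≠ 0) (h₃ : ρ₃ ≠ 0) (hk : k ≠ 0) (hδ : δ ≠ 0)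
    (hτ : τ ≠ 0) (V Z Θ Y U Q G : ℂ) :
    J₁ ρ₁ ρ₂ ρ₃ k b δ τ b₀ (I * ξ * U - Y) (I * ξ * Y) ((-(I * ξ * Q) - I * δ * ξ * Y) / ρ₃) Y U Q
      + J₁ ρ₁ ρ₂ ρ₃ k b δ τ b₀ V Z Θ
        ((I * ((b - b₀ : ℝ) : ℂ) * ξ * Z - m * ξ ^ 2 * G + k * V - I * δ * ξ * Θ) / ρ₂)
        (I * k * ξ * V / ρ₁) ((-(β * Q) - I * ξ * Θ) / τ)
    = -(τ*k)*‖V‖^2 + τ*ρ₂*‖Y‖^2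
    + ((τ - ρ₁/(ρ₃*k)) * (ρ₂ - b*ρ₁/k) - τ*ρ₁*δ^2/(ρ₃*k)) * (I * ξ * conj U * Y).re
    + (1/δ)*((τ - ρ₁/(ρ₃*k)) * (ρ₂ - b*ρ₁/k) - τ*ρ₁*δ^2/(ρ₃*k) + τ*b₀*ρ₃*(τ - ρ₁/(ρ₃*k)))
        * (I * ξ * Q * conj U).re
    + (τ/δ)*(ρ₂ - b*ρ₁/k + τ*b₀*ρ₃) * (Y * conj Q).re
    + τ*m*ξ^2 * (V * conj G).re
    + ((ρ₂ - b*ρ₁/k + τ*b₀*ρ₃)*β/δ) * (V * conj Q).re := by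
  simp only [J₁, map_div₀, map_sub, map_add, map_mul, map_neg, conj_I, conj_ofReal, map_pow,
    Complex.sq_norm, normSq_apply]
  simp only [add_re, sub_re, mul_re, mul_im, div_re, div_im, sub_im, add_im, neg_re, neg_im,
    I_re, I_im, ofReal_re, ofReal_im, normSq_ofReal, conj_re, conj_im, pow_two]
  field_simp
  ring

end CattaneoFunctional

theorem stmt3_general (ρ₁ ρ₂ ρ₃ k b m δ β τ k₁ k₂ b₀ : ℝ)
    (hρ₁ : 0 < ρ₁) (hρ₂ : 0 < ρ₂) (hρ₃ : 0 < ρ₃) (hk : 0 < k)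
    (hδ : 0 < δ) (hτ : 0 < τ) :
    ∀ ε : ℝ, 0 < ε → ∃ C > 0, ∀ (ξ : ℝ) (g g' : ℝ → ℝ) (v u z y θ q : ℝ → ℂ) (η ηt ηs : ℝ → ℝ → ℂ),
      (∀ s, 0 ≤ s → 0 ≤ g s) →
      (∀ s, 0 ≤ s → HasDerivAt g (g' s) s) →
      (∀ s, 0 ≤ s → -k₁ * g s ≤ g' s ∧ g' s ≤ -k₂ * g s) →
      (b₀ = ∫ s in Set.Ici (0:ℝ), g s) →
      (∀ t, 0 ≤ t → HasDerivAt v (Complex.I * (ξ:ℂ) * u t - y t) t) →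
      (∀ t, 0 ≤ t → HasDerivAt u (Complex.I * (k:ℂ) * (ξ:ℂ) * v t / (ρ₁:ℂ)) t) →
      (∀ t, 0 ≤ t → HasDerivAt z (Complex.I * (ξ:ℂ) * y t) t) →
      (∀ t, 0 ≤ t → HasDerivAt y ((Complex.I * ((b - b₀ : ℝ):ℂ) * (ξ:ℂ) * z t - (m:ℂ) * (ξ:ℂ)^2 * (∫ s in Set.Ici (0:ℝ), (g s : ℂ) * η t s) + (k:ℂ) * v t - Complex.I * (δ:ℂ) * (ξ:ℂ) * θ t) / (ρ₂:ℂ)) t) →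
      (∀ t, 0 ≤ t → HasDerivAt θ ((-(Complex.I * (ξ:ℂ) * q t) - Complex.I * (δ:ℂ) * (ξ:ℂ) * y t) / (ρ₃:ℂ)) t) →
      (∀ t, 0 ≤ t → HasDerivAt q ((-((β:ℂ) * q t) - Complex.I * (ξ:ℂ) * θ t) / (τ:ℂ)) t) →
      (∀ t s, 0 ≤ t → 0 ≤ s → HasDerivAt (fun r => η r s) (ηt t s) t) →
      (∀ t s, 0 ≤ t → 0 ≤ s → HasDerivAt (fun r => η t r) (ηs t s) s) →
      (Continuous (Function.uncurry ηt)) →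
      (Continuous (Function.uncurry ηs)) →
      (∀ t s, 0 ≤ t → 0 ≤ s → ηt t s + ηs t s = y t) →
      (∀ t, 0 ≤ t → η t 0 = 0) →
      (∀ t, 0 ≤ t → MeasureTheory.IntegrableOn (fun s => g s * ‖η t s‖^2) (Set.Ici 0)) →
      (∀ t, 0 ≤ t → MeasureTheory.IntegrableOn (fun s => (g s : ℂ) * η t s) (Set.Ici 0)) →
      (∀ t, 0 ≤ t → Filter.Tendsto (fun s => g s * ‖η t s‖^2) Filter.atTop (nhds 0)) →
      (∀ t, 0 ≤ t → HasDerivAt (fun r => ∫ s in Set.Ici (0:ℝ), g s * ‖η r s‖^2) (∫ s in Set.Ici (0:ℝ), g s * (2 * (ηt t s * (starRingEnd ℂ) (η t s)).re)) t) →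
      ∀ t, 0 ≤ t → ∃ d : ℝ,
        HasDerivAt (fun r => -(τ*ρ₂) * (v r * (starRingEnd ℂ) (y r)).re - ((b - b₀)*τ*ρ₁/k) * (z r * (starRingEnd ℂ) (u r)).re + (δ*ρ₁*(τ + (1/δ^2)*(ρ₂ - b*ρ₁/k + τ*b₀*ρ₃))/k) * (θ r * (starRingEnd ℂ) (u r)).re - ((τ/δ)*(ρ₂ - b*ρ₁/k + τ*b₀*ρ₃)) * (v r * (starRingEnd ℂ) (q r)).re) d t ∧
        d + τ*k*(1-ε)*‖v t‖^2 ≤ τ*ρ₂*‖y t‖^2 + C*ξ^4*‖∫ s in Set.Ici (0:ℝ), (g s : ℂ) * η t s‖^2 + ((τ - ρ₁/(ρ₃*k)) * (ρ₂ - b*ρ₁/k) - τ*ρ₁*δ^2/(ρ₃*k)) * (Complex.I * (ξ:ℂ) * (starRingEnd ℂ) (u t) * y t).re + (1/δ)*((τ - ρ₁/(ρ₃*k)) * (ρ₂ - b*ρ₁/k) - τ*ρ₁*δ^2/(ρ₃*k) + τ*b₀*ρ₃*(τ - ρ₁/(ρ₃*k))) * (Complex.I * (ξ:ℂ) * q t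 * (starRingEnd ℂ) (u t)).re + (τ/δ)*(ρ₂ - b*ρ₁/k + τ*b₀*ρ₃) * (y t * (starRingEnd ℂ) (q t)).re + C*‖q t‖^2 := by
  intro ε hε
  have hκ : 0 < τ * k := mul_pos hτ hk
  obtain ⟨C, hC, hCm, hCβ⟩ :=
    exists_pos_sq_le_mul (by positivity : 0 < 2 * (τ * k) * ε) (τ * m) ((ρ₂ - b*ρ₁/k + τ*b₀*ρ₃)*β/δ)
  refine ⟨C, hC, ?_⟩
  intro ξ g g' v u z y θ q η ηt ηs _ _ _ _ hv hu hz hy hθ hq _ _ _ _ _ _ _ _ _ _ t ht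
  refine ⟨_, hasDerivAt_J₁ ρ₁ ρ₂ ρ₃ k b δ τ b₀ (hv t ht) (hz t ht) (hθ t ht) (hy t ht) (hu t ht)
    (hq t ht), ?_⟩
  rw [J₁_deriv_eq b b₀ m β ξ hρ₁.ne' hρ₂.ne' hρ₃.ne' hk.ne' hδ.ne' hτ.ne']
  have := neg_sq_add_re_mul_conj_le hκ hε hCm hCβ (ξ ^ 2) (v t)
    (∫ s in Set.Ici (0:ℝ), (g s : ℂ) * η t s) (q t)
  linarith

theorem stmt3 (ρ₁ ρ₂ ρ₃ k b m δ β τ k₁ k₂ b₀ : ℝ)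
    (hρ₁ : 0 < ρ₁) (hρ₂ : 0 < ρ₂) (hρ₃ : 0 < ρ₃) (hk : 0 < k) (hb : 0 < b)
    (hm : 0 < m) (hδ : 0 < δ) (hβ : 0 < β) (hτ : 0 < τ)
    (hk₁₂ : k₂ ≤ k₁) (hk₂ : 0 < k₂) (ha : 0 < b - b₀) :
    ∀ ε : ℝ, 0 < ε → ∃ C > 0, ∀ (ξ : ℝ) (g g' : ℝ → ℝ) (v u z y θ q : ℝ → ℂ) (η ηt ηs : ℝ → ℝ → ℂ),
      (∀ s, 0 ≤ s → 0 ≤ g s) →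
      (∀ s, 0 ≤ s → HasDerivAt g (g' s) s) →
      (∀ s, 0 ≤ s → -k₁ * g s ≤ g' s ∧ g' s ≤ -k₂ * g s) →
      (b₀ = ∫ s in Set.Ici (0:ℝ), g s) →
      (∀ t, 0 ≤ t → HasDerivAt v (Complex.I * (ξ:ℂ) * u t - y t) t) →
      (∀ t, 0 ≤ t → HasDerivAt u (Complex.I * (k:ℂ) * (ξ:ℂ) * v t / (ρ₁:ℂ)) t) →
      (∀ t, 0 ≤ t → HasDerivAt z (Complex.I * (ξ:ℂ) * y t) t) →
      (∀ t, 0 ≤ t → HasDerivAt y ((Complex.I * ((b - b₀ : ℝ):ℂ) * (ξ:ℂ) * z t - (m:ℂ) * (ξ:ℂ)^2 * (∫ s in Set.Ici (0:ℝ), (g s : ℂ) * η t s) + (k:ℂ) * v t - Complex.I * (δ:ℂ) * (ξ:ℂ) * θ t) / (ρ₂:ℂ)) t) →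
      (∀ t, 0 ≤ t → HasDerivAt θ ((-(Complex.I * (ξ:ℂ) * q t) - Complex.I * (δ:ℂ) * (ξ:ℂ) * y t) / (ρ₃:ℂ)) t) →
      (∀ t, 0 ≤ t → HasDerivAt q ((-((β:ℂ) * q t) - Complex.I * (ξ:ℂ) * θ t) / (τ:ℂ)) t) →
      (∀ t s, 0 ≤ t → 0 ≤ s → HasDerivAt (fun r => η r s) (ηt t s) t) →
      (∀ t s, 0 ≤ t → 0 ≤ s → HasDerivAt (fun r => η t r) (ηs t s) s) →
      (Continuous (Function.uncurry ηt)) →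
      (Continuous (Function.uncurry ηs)) →
      (∀ t s, 0 ≤ t → 0 ≤ s → ηt t s + ηs t s = y t) →
      (∀ t, 0 ≤ t → η t 0 = 0) →
      (∀ t, 0 ≤ t → MeasureTheory.IntegrableOn (fun s => g s * ‖η t s‖^2) (Set.Ici 0)) →
      (∀ t, 0 ≤ t → MeasureTheory.IntegrableOn (fun s => (g s : ℂ) * η t s) (Set.Ici 0)) →
      (∀ t, 0 ≤ t → Filter.Tendsto (fun s => g s * ‖η t s‖^2) Filter.atTop (nhds 0)) →
      (∀ t, 0 ≤ t → HasDerivAt (fun r => ∫ s in Set.Ici (0:ℝ), g s * ‖η r s‖^2) (∫ s in Set.Ici (0:ℝ), g s * (2 * (ηt t s * (starRingEnd ℂ) (η t s)).re)) t) →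
      ∀ t, 0 ≤ t → ∃ d : ℝ,
        HasDerivAt (fun r => -(τ*ρ₂) * (v r * (starRingEnd ℂ) (y r)).re - ((b - b₀)*τ*ρ₁/k) * (z r * (starRingEnd ℂ) (u r)).re + (δ*ρ₁*(τ + (1/δ^2)*(ρ₂ - b*ρ₁/k + τ*b₀*ρ₃))/k) * (θ r * (starRingEnd ℂ) (u r)).re - ((τ/δ)*(ρ₂ - b*ρ₁/k + τ*b₀*ρ₃)) * (v r * (starRingEnd ℂ) (q r)).re) d t ∧
        d + τ*k*(1-ε)*‖v t‖^2 ≤ τ*ρ₂*‖y t‖^2 + C*ξ^4*‖∫ s in Set.Ici (0:ℝ), (g s : ℂ) * η t s‖^2 + ((τ - ρ₁/(ρ₃*k)) * (ρ₂ - b*ρ₁/k) - τ*ρ₁*δ^2/(ρ₃*k)) * (Complex.I * (ξ:ℂ) * (starRingEnd ℂ) (u t) * y t).re + (1/δ)*((τ - ρ₁/(ρ₃*k)) * (ρ₂ - b*ρ₁/k) - τ*ρ₁*δ^2/(ρ₃*k) + τ*b₀*ρ₃*(τ - ρ₁/(ρ₃*k))) * (Complex.I * (ξ:ℂ) * q t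 * (starRingEnd ℂ) (u t)).re + (τ/δ)*(ρ₂ - b*ρ₁/k + τ*b₀*ρ₃) * (y t * (starRingEnd ℂ) (q t)).re + C*‖q t‖^2 :=
  stmt3_general ρ₁ ρ₂ ρ₃ k b m δ β τ k₁ k₂ b₀ hρ₁ hρ₂ hρ₃ hk hδ hτ
end

section
/- Estimate for the second auxiliary functional of the Cattaneo system: define J₂(t) = ρ₁ Re(iξ v ū) + ρ₂ Re(iξ y z̄) + δτ Re(iξ z q̄). Then for every ε > 0 there exists a constant C(ε) > 0, depending only on ε and the system parameters, such that for all t ≥ 0: (d/dt)J₂(t) + ρ₁(1−ε)ξ²|u|² + a(1−ε)ξ²|z|² ≤ C(ε)(1+ξ²)|v|² + C(ε)(1+ξ²)|y|² + C(ε)(1+ξ²)|q|² + C(ε)ξ⁴|∫₀^∞ g(s)η(t,s)ds|². -/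
open MeasureTheory Filter Complex

/-! Differentiating `J₂` along the system, the `θ`-terms coming from the `y`- and `q`-equations
cancel, leaving `kξ²|v|² + ρ₂ξ²|y|² − ρ₁ξ²|u|² − aξ²|z|²` plus five cross terms of the form
`c Re(w w̄')` with `w'` one of `iξu`, `iξz`, `iξy`. Young's inequality `c Re(w w̄') ≤ γ|w'|² + c²|w|²/4γ`
with `γ = ερ₁` resp. `γ = εa/3` absorbs the `iξu`, `iξz` parts into the dissipative terms, and
everything else is bounded by the right-hand side. -/

theorem mul_re_mul_conj_le (c : ℝ) {γ : ℝ} (hγ : 0 < γ) (w₁ w₂ : ℂ) :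
    c * (w₁ * starRingEnd ℂ w₂).re ≤ γ * ‖w₂‖ ^ 2 + c ^ 2 / (4 * γ) * ‖w₁‖ ^ 2 := by
  have hre : c * (w₁ * starRingEnd ℂ w₂).re ≤ |c| * ‖w₁‖ * ‖w₂‖ :=
    calc c * (w₁ * starRingEnd ℂ w₂).re
        ≤ |c| * |(w₁ * starRingEnd ℂ w₂).re| := by rw [← abs_mul]; exact le_abs_self _
      _ ≤ |c| * ‖w₁ * starRingEnd ℂ w₂‖ := by gcongr; exact abs_re_le_norm _
      _ = |c| * ‖w₁‖ * ‖w₂‖ := by rw [norm_mul, norm_conj, mul_assoc]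
  have hyoung : γ * ‖w₂‖ ^ 2 + c ^ 2 / (4 * γ) * ‖w₁‖ ^ 2 - |c| * ‖w₁‖ * ‖w₂‖
      = (2 * γ * ‖w₂‖ - |c| * ‖w₁‖) ^ 2 / (4 * γ) := by
    rw [← sq_abs c]
    field_simp
    ring
  have : 0 ≤ (2 * γ * ‖w₂‖ - |c| * ‖w₁‖) ^ 2 / (4 * γ) := by positivity
  linarith

theorem norm_I_mul_ofReal_mul_sq (ξ : ℝ) (w : ℂ) : ‖I * ξ * w‖ ^ 2 = ξ ^ 2 * ‖w‖ ^ 2 := by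
  rw [norm_mul, norm_mul, norm_I, norm_real, Real.norm_eq_abs, one_mul, mul_pow, sq_abs]

theorem HasDerivAt.re_mul_mul_conj {f g : ℝ → ℂ} {f' g' : ℂ} {t : ℝ} (c : ℂ)
    (hf : HasDerivAt f f' t) (hg : HasDerivAt g g' t) :
    HasDerivAt (fun r => (c * f r * starRingEnd ℂ (g r)).re)
      (c * f' * starRingEnd ℂ (g t) + c * f t * starRingEnd ℂ g').re t :=
  reCLM.hasFDerivAt.comp_hasDerivAt t
    ((hf.const_mul c).mul (conjCLE.hasFDerivAt.comp_hasDerivAt t hg))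

theorem mul_sq_add_mul_sq_le {A B C : ℝ} (hA : A ≤ C) (hB : B ≤ C) (x X : ℝ) :
    (A * x ^ 2 + B) * X ^ 2 ≤ C * (1 + x ^ 2) * X ^ 2 := by
  gcongr
  nlinarith [sq_nonneg x]

section Cattaneo

variable (ρ₁ ρ₂ k m δ β τ a ξ : ℝ) (v u z y θ q G : ℂ)

/-- `G` stands for the memory term `∫₀^∞ g(s) η(t, s) ds`. -/
theorem J₂_deriv_eq (hρ₁ : ρ₁ ≠ 0) (hρ₂ : ρ₂ ≠ 0) (hτ : τ ≠ 0) :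
    ρ₁ * (I * ξ * (I * ξ * u - y) * starRingEnd ℂ u
        + I * ξ * v * starRingEnd ℂ (I * k * ξ * v / ρ₁)).re
      + ρ₂ * (I * ξ * ((I * (a : ℂ) * ξ * z - m * (ξ : ℂ) ^ 2 * G + k * v - I * δ * ξ * θ) / ρ₂)
          * starRingEnd ℂ z + I * ξ * y * starRingEnd ℂ (I * ξ * y)).re
      + δ * τ * (I * ξ * (I * ξ * y) * starRingEnd ℂ q
          + I * ξ * z * starRingEnd ℂ ((-((β : ℂ) * q) - I * ξ * θ) / τ)).re
    = k * ξ ^ 2 * ‖v‖ ^ 2 + ρ₂ * ξ ^ 2 * ‖y‖ ^ 2 - ρ₁ * ξ ^ 2 * ‖u‖ ^ 2 - a * ξ ^ 2 * ‖z‖ ^ 2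
      + ρ₁ * (y * starRingEnd ℂ (I * ξ * u)).re
      + m * (ξ ^ 2 * G * starRingEnd ℂ (I * ξ * z)).re
      + -k * (v * starRingEnd ℂ (I * ξ * z)).re
      + -(δ * τ) * (I * ξ * q * starRingEnd ℂ (I * ξ * y)).re
      + -(δ * β) * (q * starRingEnd ℂ (I * ξ * z)).re := by
  simp only [Complex.sq_norm, normSq_apply, mul_re, mul_im, div_re, div_im, add_re, add_im, sub_re,
    sub_im, neg_re, neg_im, I_re, I_im, ofReal_re, ofReal_im, conj_re, conj_im, ← ofReal_pow]
  field_simp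
  ring

theorem J₂_deriv_add_le (ε : ℝ) (hρ₁ : 0 < ρ₁) (hρ₂ : ρ₂ ≠ 0) (hτ : τ ≠ 0) (ha : 0 < a)
    (hε : 0 < ε) :
    ρ₁ * (I * ξ * (I * ξ * u - y) * starRingEnd ℂ u
        + I * ξ * v * starRingEnd ℂ (I * k * ξ * v / ρ₁)).re
      + ρ₂ * (I * ξ * ((I * (a : ℂ) * ξ * z - m * (ξ : ℂ) ^ 2 * G + k * v - I * δ * ξ * θ) / ρ₂)
          * starRingEnd ℂ z + I * ξ * y * starRingEnd ℂ (I * ξ * y)).re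
      + δ * τ * (I * ξ * (I * ξ * y) * starRingEnd ℂ q
          + I * ξ * z * starRingEnd ℂ ((-((β : ℂ) * q) - I * ξ * θ) / τ)).re
      + ρ₁ * (1 - ε) * ξ ^ 2 * ‖u‖ ^ 2 + a * (1 - ε) * ξ ^ 2 * ‖z‖ ^ 2
    ≤ (k * ξ ^ 2 + k ^ 2 / (4 * (a * ε / 3))) * ‖v‖ ^ 2
      + ((ρ₂ + 1 / 2) * ξ ^ 2 + ρ₁ ^ 2 / (4 * (ρ₁ * ε))) * ‖y‖ ^ 2
      + ((δ * τ) ^ 2 / (4 * (1 / 2)) * ξ ^ 2 + (δ * β) ^ 2 / (4 * (a * ε / 3))) * ‖q‖ ^ 2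
      + m ^ 2 / (4 * (a * ε / 3)) * ξ ^ 4 * ‖G‖ ^ 2 := by
  have hγ : 0 < a * ε / 3 := by positivity
  have hu := mul_re_mul_conj_le ρ₁ (mul_pos hρ₁ hε) y (I * ξ * u)
  have hG := mul_re_mul_conj_le m hγ (ξ ^ 2 * G) (I * ξ * z)
  have hv := mul_re_mul_conj_le (-k) hγ v (I * ξ * z)
  have hy := mul_re_mul_conj_le (-(δ * τ)) one_half_pos (I * ξ * q) (I * ξ * y)
  have hq := mul_re_mul_conj_le (-(δ * β)) hγ q (I * ξ * z)
  have hξG : ‖(ξ : ℂ) ^ 2 * G‖ ^ 2 = ξ ^ 4 * ‖G‖ ^ 2 := by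
    rw [norm_mul, norm_pow, norm_real, Real.norm_eq_abs, sq_abs]
    ring
  simp only [norm_I_mul_ofReal_mul_sq, neg_sq, hξG] at hu hG hv hy hq
  rw [J₂_deriv_eq ρ₁ ρ₂ k m δ β τ a ξ v u z y θ q G hρ₁.ne' hρ₂ hτ]
  linarith

end Cattaneo

theorem stmt4_general (ρ₁ ρ₂ ρ₃ k b m δ β τ k₁ k₂ b₀ : ℝ)
    (hρ₁ : 0 < ρ₁) (hρ₂ : 0 < ρ₂) (hk : 0 < k)
    (hτ : 0 < τ)
    (ha : 0 < b - b₀) :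
    ∀ ε : ℝ, 0 < ε → ∃ C > 0, ∀ (ξ : ℝ) (g g' : ℝ → ℝ) (v u z y θ q : ℝ → ℂ) (η ηt ηs : ℝ → ℝ → ℂ),
      (∀ s, 0 ≤ s → 0 ≤ g s) →
      (∀ s, 0 ≤ s → HasDerivAt g (g' s) s) →
      (∀ s, 0 ≤ s → -k₁ * g s ≤ g' s ∧ g' s ≤ -k₂ * g s) →
      (b₀ = ∫ s in Set.Ici (0:ℝ), g s) →
      (∀ t, 0 ≤ t → HasDerivAt v (Complex.I * (ξ:ℂ) * u t - y t) t) →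
      (∀ t, 0 ≤ t → HasDerivAt u (Complex.I * (k:ℂ) * (ξ:ℂ) * v t / (ρ₁:ℂ)) t) →
      (∀ t, 0 ≤ t → HasDerivAt z (Complex.I * (ξ:ℂ) * y t) t) →
      (∀ t, 0 ≤ t → HasDerivAt y ((Complex.I * ((b - b₀ : ℝ):ℂ) * (ξ:ℂ) * z t - (m:ℂ) * (ξ:ℂ)^2 * (∫ s in Set.Ici (0:ℝ), (g s : ℂ) * η t s) + (k:ℂ) * v t - Complex.I * (δ:ℂ) * (ξ:ℂ) * θ t) / (ρ₂:ℂ)) t) →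
      (∀ t, 0 ≤ t → HasDerivAt θ ((-(Complex.I * (ξ:ℂ) * q t) - Complex.I * (δ:ℂ) * (ξ:ℂ) * y t) / (ρ₃:ℂ)) t) →
      (∀ t, 0 ≤ t → HasDerivAt q ((-((β:ℂ) * q t) - Complex.I * (ξ:ℂ) * θ t) / (τ:ℂ)) t) →
      (∀ t s, 0 ≤ t → 0 ≤ s → HasDerivAt (fun r => η r s) (ηt t s) t) →
      (∀ t s, 0 ≤ t → 0 ≤ s → HasDerivAt (fun r => η t r) (ηs t s) s) →
      (Continuous (Function.uncurry ηt)) →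
      (Continuous (Function.uncurry ηs)) →
      (∀ t s, 0 ≤ t → 0 ≤ s → ηt t s + ηs t s = y t) →
      (∀ t, 0 ≤ t → η t 0 = 0) →
      (∀ t, 0 ≤ t → MeasureTheory.IntegrableOn (fun s => g s * ‖η t s‖^2) (Set.Ici 0)) →
      (∀ t, 0 ≤ t → MeasureTheory.IntegrableOn (fun s => (g s : ℂ) * η t s) (Set.Ici 0)) →
      (∀ t, 0 ≤ t → Filter.Tendsto (fun s => g s * ‖η t s‖^2) Filter.atTop (nhds 0)) →
      (∀ t, 0 ≤ t → HasDerivAt (fun r => ∫ s in Set.Ici (0:ℝ), g s * ‖η r s‖^2) (∫ s in Set.Ici (0:ℝ), g s * (2 * (ηt t s * (starRingEnd ℂ) (η t s)).re)) t) →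
      ∀ t, 0 ≤ t → ∃ d : ℝ,
        HasDerivAt (fun r => ρ₁ * (Complex.I * (ξ:ℂ) * v r * (starRingEnd ℂ) (u r)).re + ρ₂ * (Complex.I * (ξ:ℂ) * y r * (starRingEnd ℂ) (z r)).re + δ*τ * (Complex.I * (ξ:ℂ) * z r * (starRingEnd ℂ) (q r)).re) d t ∧
        d + ρ₁*(1-ε)*ξ^2*‖u t‖^2 + (b - b₀)*(1-ε)*ξ^2*‖z t‖^2 ≤ C*(1+ξ^2)*‖v t‖^2 + C*(1+ξ^2)*‖y t‖^2 + C*(1+ξ^2)*‖q t‖^2 + C*ξ^4*‖∫ s in Set.Ici (0:ℝ), (g s : ℂ) * η t s‖^2 := by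
  intro ε hε
  set γ := (b - b₀) * ε / 3
  have hγ : 0 < γ := by positivity
  have hkv : 0 ≤ k ^ 2 / (4 * γ) := by positivity
  have hρy : 0 ≤ ρ₁ ^ 2 / (4 * (ρ₁ * ε)) := by positivity
  have hτq : 0 ≤ (δ * τ) ^ 2 / (4 * (1 / 2)) := by positivity
  have hβq : 0 ≤ (δ * β) ^ 2 / (4 * γ) := by positivity
  have hmG : 0 ≤ m ^ 2 / (4 * γ) := by positivity
  refine ⟨k + k ^ 2 / (4 * γ) + (ρ₂ + 1 / 2) + ρ₁ ^ 2 / (4 * (ρ₁ * ε))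
    + (δ * τ) ^ 2 / (4 * (1 / 2)) + (δ * β) ^ 2 / (4 * γ) + m ^ 2 / (4 * γ), by positivity, ?_⟩
  intro ξ g g' v u z y θ q η ηt ηs _ _ _ _ hv hu hz hy _ hq _ _ _ _ _ _ _ _ _ _ t ht
  refine ⟨_, ((((hv t ht).re_mul_mul_conj _ (hu t ht)).const_mul ρ₁).add
    (((hy t ht).re_mul_mul_conj _ (hz t ht)).const_mul ρ₂)).add
    (((hz t ht).re_mul_mul_conj _ (hq t ht)).const_mul (δ * τ)), ?_⟩
  refine (J₂_deriv_add_le ρ₁ ρ₂ k m δ β τ (b - b₀) ξ (v t) (u t) (z t) (y t) (θ t) (q t) _ ε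
    hρ₁ hρ₂.ne' hτ.ne' ha hε).trans ?_
  gcongr ?_ + ?_ + ?_ + ?_
  · exact mul_sq_add_mul_sq_le (by linarith) (by linarith) _ _
  · exact mul_sq_add_mul_sq_le (by linarith) (by linarith) _ _
  · exact mul_sq_add_mul_sq_le (by linarith) (by linarith) _ _
  · gcongr
    linarith

theorem stmt4 (ρ₁ ρ₂ ρ₃ k b m δ β τ k₁ k₂ b₀ : ℝ)
    (hρ₁ : 0 < ρ₁) (hρ₂ : 0 < ρ₂) (hρ₃ : 0 < ρ₃) (hk : 0 < k) (hb : 0 < b)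
    (hm : 0 < m) (hδ : 0 < δ) (hβ : 0 < β) (hτ : 0 < τ)
    (hk₁₂ : k₂ ≤ k₁) (hk₂ : 0 < k₂) (ha : 0 < b - b₀) :
    ∀ ε : ℝ, 0 < ε → ∃ C > 0, ∀ (ξ : ℝ) (g g' : ℝ → ℝ) (v u z y θ q : ℝ → ℂ) (η ηt ηs : ℝ → ℝ → ℂ),
      (∀ s, 0 ≤ s → 0 ≤ g s) →
      (∀ s, 0 ≤ s → HasDerivAt g (g' s) s) →
      (∀ s, 0 ≤ s → -k₁ * g s ≤ g' s ∧ g' s ≤ -k₂ * g s) →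
      (b₀ = ∫ s in Set.Ici (0:ℝ), g s) →
      (∀ t, 0 ≤ t → HasDerivAt v (Complex.I * (ξ:ℂ) * u t - y t) t) →
      (∀ t, 0 ≤ t → HasDerivAt u (Complex.I * (k:ℂ) * (ξ:ℂ) * v t / (ρ₁:ℂ)) t) →
      (∀ t, 0 ≤ t → HasDerivAt z (Complex.I * (ξ:ℂ) * y t) t) →
      (∀ t, 0 ≤ t → HasDerivAt y ((Complex.I * ((b - b₀ : ℝ):ℂ) * (ξ:ℂ) * z t - (m:ℂ) * (ξ:ℂ)^2 * (∫ s in Set.Ici (0:ℝ), (g s : ℂ) * η t s) + (k:ℂ) * v t - Complex.I * (δ:ℂ) * (ξ:ℂ) * θ t) / (ρ₂:ℂ)) t) →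
      (∀ t, 0 ≤ t → HasDerivAt θ ((-(Complex.I * (ξ:ℂ) * q t) - Complex.I * (δ:ℂ) * (ξ:ℂ) * y t) / (ρ₃:ℂ)) t) →
      (∀ t, 0 ≤ t → HasDerivAt q ((-((β:ℂ) * q t) - Complex.I * (ξ:ℂ) * θ t) / (τ:ℂ)) t) →
      (∀ t s, 0 ≤ t → 0 ≤ s → HasDerivAt (fun r => η r s) (ηt t s) t) →
      (∀ t s, 0 ≤ t → 0 ≤ s → HasDerivAt (fun r => η t r) (ηs t s) s) →
      (Continuous (Function.uncurry ηt)) →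
      (Continuous (Function.uncurry ηs)) →
      (∀ t s, 0 ≤ t → 0 ≤ s → ηt t s + ηs t s = y t) →
      (∀ t, 0 ≤ t → η t 0 = 0) →
      (∀ t, 0 ≤ t → MeasureTheory.IntegrableOn (fun s => g s * ‖η t s‖^2) (Set.Ici 0)) →
      (∀ t, 0 ≤ t → MeasureTheory.IntegrableOn (fun s => (g s : ℂ) * η t s) (Set.Ici 0)) →
      (∀ t, 0 ≤ t → Filter.Tendsto (fun s => g s * ‖η t s‖^2) Filter.atTop (nhds 0)) →
      (∀ t, 0 ≤ t → HasDerivAt (fun r => ∫ s in Set.Ici (0:ℝ), g s * ‖η r s‖^2) (∫ s in Set.Ici (0:ℝ), g s * (2 * (ηt t s * (starRingEnd ℂ) (η t s)).re)) t) →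
      ∀ t, 0 ≤ t → ∃ d : ℝ,
        HasDerivAt (fun r => ρ₁ * (Complex.I * (ξ:ℂ) * v r * (starRingEnd ℂ) (u r)).re + ρ₂ * (Complex.I * (ξ:ℂ) * y r * (starRingEnd ℂ) (z r)).re + δ*τ * (Complex.I * (ξ:ℂ) * z r * (starRingEnd ℂ) (q r)).re) d t ∧
        d + ρ₁*(1-ε)*ξ^2*‖u t‖^2 + (b - b₀)*(1-ε)*ξ^2*‖z t‖^2 ≤ C*(1+ξ^2)*‖v t‖^2 + C*(1+ξ^2)*‖y t‖^2 + C*(1+ξ^2)*‖q t‖^2 + C*ξ^4*‖∫ s in Set.Ici (0:ℝ), (g s : ℂ) * η t s‖^2 :=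
  stmt4_general ρ₁ ρ₂ ρ₃ k b m δ β τ k₁ k₂ b₀ hρ₁ hρ₂ hk hτ ha
end

section
/- Estimate for the thermal functional of the Cattaneo system: define J₄(t) = τρ₃ Re(iξ θ q̄). Then for every ε > 0 there exists a constant C(ε) > 0, depending only on ε and the system parameters, such that for all t ≥ 0: (d/dt)J₄(t) + ρ₃(1−ε)ξ²|θ|² ≤ τδξ²|y||q| + C(ε)(1+ξ²)|q|². -/
open MeasureTheory Complex ComplexConjugate

/-!
Differentiating `J₄ = τ ρ₃ Re(i ξ θ q̄)` along the Cattaneo equations for `θ` and `q` gives exactly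
`τ ξ² |q|² + τ δ ξ² Re(y q̄) + ρ₃ β ξ Im(θ q̄) − ρ₃ ξ² |θ|²`. The first term is absorbed in
`C (1 + ξ²) |q|²`, the second is bounded by `τ δ ξ² |y| |q|`, and Young's inequality splits the
third into `ε ρ₃ ξ² |θ|² + ρ₃ β² / (4ε) |q|²`, which costs only an `ε` of the dissipation `ρ₃ ξ² |θ|²`.
-/

lemma mul_le_mul_sq_add_sq_div {ε : ℝ} (hε : 0 < ε) (a b : ℝ) :
    a * b ≤ ε * a ^ 2 + b ^ 2 / (4 * ε) := by
  have h : ε * a ^ 2 + b ^ 2 / (4 * ε) - a * b = (2 * ε * a - b) ^ 2 / (4 * ε) := by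
    field_simp
    ring
  rw [← sub_nonneg, h]
  positivity

lemma Complex.re_mul_conj_le_norm_mul_norm (z w : ℂ) : (z * conj w).re ≤ ‖z‖ * ‖w‖ :=
  (re_le_norm _).trans_eq (by rw [norm_mul, norm_conj])

lemma Complex.mul_im_mul_conj_le_abs_mul_norm_mul_norm (c : ℝ) (z w : ℂ) :
    c * (z * conj w).im ≤ |c| * (‖z‖ * ‖w‖) := by
  refine (le_abs_self _).trans ?_
  rw [abs_mul, ← norm_conj w, ← norm_mul]
  gcongr
  exact abs_im_le_norm _

theorem HasDerivAt.re_const_mul_mul_conj {θ q : ℝ → ℂ} {θ' q' : ℂ} {t : ℝ} (c : ℂ)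
    (hθ : HasDerivAt θ θ' t) (hq : HasDerivAt q q' t) :
    HasDerivAt (fun r => (c * θ r * conj (q r)).re)
      (c * (θ' * conj (q t) + θ t * conj q')).re t := by
  have h := (hθ.const_mul c).mul hq.star
  simp only [star_def, mul_add, ← mul_assoc] at h ⊢
  exact reCLM.hasFDerivAt.comp_hasDerivAt t h

lemma cattaneo_functional_deriv_eq {ρ₃ τ : ℝ} (hρ₃ : ρ₃ ≠ 0) (hτ : τ ≠ 0) (δ β ξ : ℝ)
    (θ q y : ℂ) :
    τ * ρ₃ * (I * ξ * ((-(I * ξ * q) - I * δ * ξ * y) / ρ₃ * conj q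
        + θ * conj ((-(β * q) - I * ξ * θ) / τ))).re
      = τ * ξ ^ 2 * ‖q‖ ^ 2 + τ * δ * ξ ^ 2 * (y * conj q).re
        + ρ₃ * β * ξ * (θ * conj q).im - ρ₃ * ξ ^ 2 * ‖θ‖ ^ 2 := by
  have hρ₃' : (ρ₃ : ℂ) ≠ 0 := ofReal_ne_zero.mpr hρ₃
  have hτ' : (τ : ℂ) ≠ 0 := ofReal_ne_zero.mpr hτ
  have h : ((τ * ρ₃ : ℝ) : ℂ) * (I * ξ * ((-(I * ξ * q) - I * δ * ξ * y) / ρ₃ * conj q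
        + θ * conj ((-(β * q) - I * ξ * θ) / τ)))
      = ((τ * ξ ^ 2 : ℝ) : ℂ) * (q * conj q) + ((τ * δ * ξ ^ 2 : ℝ) : ℂ) * (y * conj q)
        - I * (((ρ₃ * β * ξ : ℝ) : ℂ) * (θ * conj q)) - ((ρ₃ * ξ ^ 2 : ℝ) : ℂ) * (θ * conj θ) := by
    simp only [map_div₀, map_sub, map_neg, map_mul, conj_I, conj_ofReal]
    push_cast
    field_simp
    ring_nf
    simp only [I_sq]
    ring
  rw [← re_ofReal_mul, h]
  simp only [sub_re, add_re, re_ofReal_mul, I_mul_re, im_ofReal_mul, mul_conj, ofReal_re,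
    normSq_eq_norm_sq]
  ring

theorem stmt6_general (ρ₁ ρ₂ ρ₃ k b m δ β τ k₁ k₂ b₀ : ℝ)
    (hρ₃ : 0 < ρ₃) (hδ : 0 < δ) (hτ : 0 < τ) :
    ∀ ε : ℝ, 0 < ε → ∃ C > 0, ∀ (ξ : ℝ) (g g' : ℝ → ℝ) (v u z y θ q : ℝ → ℂ) (η ηt ηs : ℝ → ℝ → ℂ),
      (∀ s, 0 ≤ s → 0 ≤ g s) →
      (∀ s, 0 ≤ s → HasDerivAt g (g' s) s) →
      (∀ s, 0 ≤ s → -k₁ * g s ≤ g' s ∧ g' s ≤ -k₂ * g s) →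
      (b₀ = ∫ s in Set.Ici (0:ℝ), g s) →
      (∀ t, 0 ≤ t → HasDerivAt v (Complex.I * (ξ:ℂ) * u t - y t) t) →
      (∀ t, 0 ≤ t → HasDerivAt u (Complex.I * (k:ℂ) * (ξ:ℂ) * v t / (ρ₁:ℂ)) t) →
      (∀ t, 0 ≤ t → HasDerivAt z (Complex.I * (ξ:ℂ) * y t) t) →
      (∀ t, 0 ≤ t → HasDerivAt y ((Complex.I * ((b - b₀ : ℝ):ℂ) * (ξ:ℂ) * z t - (m:ℂ) * (ξ:ℂ)^2 * (∫ s in Set.Ici (0:ℝ), (g s : ℂ) * η t s) + (k:ℂ) * v t - Complex.I * (δ:ℂ) * (ξ:ℂ) * θ t) / (ρ₂:ℂ)) t) →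
      (∀ t, 0 ≤ t → HasDerivAt θ ((-(Complex.I * (ξ:ℂ) * q t) - Complex.I * (δ:ℂ) * (ξ:ℂ) * y t) / (ρ₃:ℂ)) t) →
      (∀ t, 0 ≤ t → HasDerivAt q ((-((β:ℂ) * q t) - Complex.I * (ξ:ℂ) * θ t) / (τ:ℂ)) t) →
      (∀ t s, 0 ≤ t → 0 ≤ s → HasDerivAt (fun r => η r s) (ηt t s) t) →
      (∀ t s, 0 ≤ t → 0 ≤ s → HasDerivAt (fun r => η t r) (ηs t s) s) →
      (Continuous (Function.uncurry ηt)) →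
      (Continuous (Function.uncurry ηs)) →
      (∀ t s, 0 ≤ t → 0 ≤ s → ηt t s + ηs t s = y t) →
      (∀ t, 0 ≤ t → η t 0 = 0) →
      ∀ t, 0 ≤ t → ∃ d : ℝ,
        HasDerivAt (fun r => τ*ρ₃ * (Complex.I * (ξ:ℂ) * θ r * (starRingEnd ℂ) (q r)).re) d t ∧
        d + ρ₃*(1-ε)*ξ^2*‖θ t‖^2 ≤ τ*δ*ξ^2*‖y t‖*‖q t‖ + C*(1+ξ^2)*‖q t‖^2 := by
  intro ε hε
  refine ⟨τ + ρ₃ * β ^ 2 / (4 * ε), by positivity, ?_⟩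
  intro ξ g g' v u z y θ q η ηt ηs _ _ _ _ _ _ _ _ hθ hq _ _ _ _ _ _ t ht
  refine ⟨_, (((hθ t ht).re_const_mul_mul_conj (I * ξ) (hq t ht)).const_mul (τ * ρ₃)), ?_⟩
  rw [cattaneo_functional_deriv_eq hρ₃.ne' hτ.ne']
  have hy : τ * δ * ξ ^ 2 * (y t * conj (q t)).re ≤ τ * δ * ξ ^ 2 * (‖y t‖ * ‖q t‖) := by
    gcongr
    exact re_mul_conj_le_norm_mul_norm _ _
  have hθq : ρ₃ * β * ξ * (θ t * conj (q t)).im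
      ≤ ε * ρ₃ * ξ ^ 2 * ‖θ t‖ ^ 2 + ρ₃ * β ^ 2 / (4 * ε) * ‖q t‖ ^ 2 := calc
    _ = ρ₃ * (β * ξ * (θ t * conj (q t)).im) := by ring
    _ ≤ ρ₃ * ((|ξ| * ‖θ t‖) * (|β| * ‖q t‖)) := by
      refine mul_le_mul_of_nonneg_left ?_ hρ₃.le
      exact (mul_im_mul_conj_le_abs_mul_norm_mul_norm (β * ξ) (θ t) (q t)).trans_eq
        (by rw [abs_mul]; ring)
    _ ≤ ρ₃ * (ε * (|ξ| * ‖θ t‖) ^ 2 + (|β| * ‖q t‖) ^ 2 / (4 * ε)) := by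
      gcongr
      exact mul_le_mul_sq_add_sq_div hε _ _
    _ = _ := by rw [mul_pow, mul_pow, sq_abs, sq_abs]; ring
  have hq₂ : 0 ≤ τ * ‖q t‖ ^ 2 + ρ₃ * β ^ 2 / (4 * ε) * ξ ^ 2 * ‖q t‖ ^ 2 := by positivity
  linear_combination hy + hθq + hq₂

theorem stmt6 (ρ₁ ρ₂ ρ₃ k b m δ β τ k₁ k₂ b₀ : ℝ)
    (hρ₁ : 0 < ρ₁) (hρ₂ : 0 < ρ₂) (hρ₃ : 0 < ρ₃) (hk : 0 < k) (hb : 0 < b)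
    (hm : 0 < m) (hδ : 0 < δ) (hβ : 0 < β) (hτ : 0 < τ)
    (hk₁₂ : k₂ ≤ k₁) (hk₂ : 0 < k₂) (ha : 0 < b - b₀) :
    ∀ ε : ℝ, 0 < ε → ∃ C > 0, ∀ (ξ : ℝ) (g g' : ℝ → ℝ) (v u z y θ q : ℝ → ℂ) (η ηt ηs : ℝ → ℝ → ℂ),
      (∀ s, 0 ≤ s → 0 ≤ g s) →
      (∀ s, 0 ≤ s → HasDerivAt g (g' s) s) →
      (∀ s, 0 ≤ s → -k₁ * g s ≤ g' s ∧ g' s ≤ -k₂ * g s) →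
      (b₀ = ∫ s in Set.Ici (0:ℝ), g s) →
      (∀ t, 0 ≤ t → HasDerivAt v (Complex.I * (ξ:ℂ) * u t - y t) t) →
      (∀ t, 0 ≤ t → HasDerivAt u (Complex.I * (k:ℂ) * (ξ:ℂ) * v t / (ρ₁:ℂ)) t) →
      (∀ t, 0 ≤ t → HasDerivAt z (Complex.I * (ξ:ℂ) * y t) t) →
      (∀ t, 0 ≤ t → HasDerivAt y ((Complex.I * ((b - b₀ : ℝ):ℂ) * (ξ:ℂ) * z t - (m:ℂ) * (ξ:ℂ)^2 * (∫ s in Set.Ici (0:ℝ), (g s : ℂ) * η t s) + (k:ℂ) * v t - Complex.I * (δ:ℂ) * (ξ:ℂ) * θ t) / (ρ₂:ℂ)) t) →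
      (∀ t, 0 ≤ t → HasDerivAt θ ((-(Complex.I * (ξ:ℂ) * q t) - Complex.I * (δ:ℂ) * (ξ:ℂ) * y t) / (ρ₃:ℂ)) t) →
      (∀ t, 0 ≤ t → HasDerivAt q ((-((β:ℂ) * q t) - Complex.I * (ξ:ℂ) * θ t) / (τ:ℂ)) t) →
      (∀ t s, 0 ≤ t → 0 ≤ s → HasDerivAt (fun r => η r s) (ηt t s) t) →
      (∀ t s, 0 ≤ t → 0 ≤ s → HasDerivAt (fun r => η t r) (ηs t s) s) →
      (Continuous (Function.uncurry ηt)) →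
      (Continuous (Function.uncurry ηs)) →
      (∀ t s, 0 ≤ t → 0 ≤ s → ηt t s + ηs t s = y t) →
      (∀ t, 0 ≤ t → η t 0 = 0) →
      ∀ t, 0 ≤ t → ∃ d : ℝ,
        HasDerivAt (fun r => τ*ρ₃ * (Complex.I * (ξ:ℂ) * θ r * (starRingEnd ℂ) (q r)).re) d t ∧
        d + ρ₃*(1-ε)*ξ^2*‖θ t‖^2 ≤ τ*δ*ξ^2*‖y t‖*‖q t‖ + C*(1+ξ^2)*‖q t‖^2 :=
  stmt6_general ρ₁ ρ₂ ρ₃ k b m δ β τ k₁ k₂ b₀ hρ₃ hδ hτ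
end

section
/- Estimate for the first auxiliary functional of the Fourier-law system: set χ₀ := ρ₂ − bρ₁/k and define K₁(t) = −ρ₂ Re(v ȳ) − (aρ₁/k) Re(z ū) + (b₀ρ₁ρ₃/(kδ)) Re(θ ū). Then for every ε > 0 there exists a constant C(ε) > 0, depending only on ε and the system parameters, such that for all t ≥ 0: (d/dt)K₁(t) + k(1−ε)|v|² ≤ ρ₂|y|² + χ₀ Re(iξ ū y) + C(ε)ξ²|θ|² + C(ε)ξ⁴|∫₀^∞ g(s)η(t,s)ds|² + (b₀β̃ρ₁/(kδ))ξ²|θ||u|. -/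
open MeasureTheory Filter Complex
open scoped ComplexConjugate

/-
Along the system, every derivative in `K₁'` is replaced by the right-hand side of its equation.
The `a`-coupling terms `Re(iξ z v̄)` coming from `v ȳ'` and `z ū'` cancel, the three
`Re(iξ ū y)` terms combine into `χ₀ Re(iξ ū y)` (because `a + b₀ = b`), and `v ȳ'` produces `-k|v|²`.
What is left are cross terms `mξ² Re(v Ḡ)` and `ξ Re(θ v̄)`, each absorbed into `kε|v|²` by Young's
inequality at the price of `C(ε)ξ⁴|G|²` and `C(ε)ξ²|θ|²`, and the term `-ξ² Re(θ ū)`, bounded by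
`ξ²|θ||u|` since its coefficient is nonnegative (`b₀ ≥ 0` as `g ≥ 0`).
-/

lemma mul_le_half_mul_sq_add_sq_div {p : ℝ} (hp : 0 < p) (x w : ℝ) :
    x * w ≤ p / 2 * x ^ 2 + w ^ 2 / (2 * p) := by
  have h : p / 2 * x ^ 2 + w ^ 2 / (2 * p) - x * w = (p * x - w) ^ 2 / (2 * p) := by
    field_simp; ring
  linarith [show 0 ≤ (p * x - w) ^ 2 / (2 * p) by positivity]

lemma hasDerivAt_re_mul_conj {f h : ℝ → ℂ} {f' h' : ℂ} {t : ℝ} (hf : HasDerivAt f f' t)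
    (hh : HasDerivAt h h' t) :
    HasDerivAt (fun r => (f r * conj (h r)).re) (f' * conj (h t) + f t * conj h').re t :=
  reCLM.hasFDerivAt.comp_hasDerivAt t (hf.mul hh.star)

lemma neg_re_mul_conj_le (z w : ℂ) : -(z * conj w).re ≤ ‖z‖ * ‖w‖ := by
  have h := re_le_norm (-(z * conj w))
  rwa [neg_re, norm_neg, norm_mul, RCLike.norm_conj] at h

section FourierLaw

variable (ρ₁ ρ₂ ρ₃ k b b₀ m δ βt ξ : ℝ)

/-- `K₁'` along the system, with `G` standing for `∫₀^∞ g(s) η(t,s) ds`. -/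
noncomputable def K₁Rate (v u y θ G : ℂ) : ℝ :=
  ρ₂ * ‖y‖ ^ 2 - k * ‖v‖ ^ 2 + (ρ₂ - b * ρ₁ / k) * (I * ξ * conj u * y).re
    + m * ξ ^ 2 * (v * conj G).re - δ * (I * ξ * v * conj θ).re
    - b₀ * βt * ρ₁ / (k * δ) * ξ ^ 2 * (θ * conj u).re - b₀ * ρ₃ / δ * (I * ξ * θ * conj v).re

variable {ρ₁ ρ₂ ρ₃ k b b₀ m δ βt ξ}

lemma hasDerivAt_K₁ (hρ₁ : ρ₁ ≠ 0) (hρ₂ : ρ₂ ≠ 0) (hρ₃ : ρ₃ ≠ 0) (hk : k ≠ 0) (hδ : δ ≠ 0)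
    {v u z y θ : ℝ → ℂ} {G : ℂ} {t : ℝ}
    (hv : HasDerivAt v (I * ξ * u t - y t) t)
    (hu : HasDerivAt u (I * k * ξ * v t / ρ₁) t)
    (hz : HasDerivAt z (I * ξ * y t) t)
    (hy : HasDerivAt y ((I * ((b - b₀ : ℝ) : ℂ) * ξ * z t - m * (ξ : ℂ) ^ 2 * G + k * v t
      - I * δ * ξ * θ t) / ρ₂) t)
    (hθ : HasDerivAt θ ((-(βt * (ξ : ℂ) ^ 2 * θ t) - I * δ * ξ * y t) / ρ₃) t) :
    HasDerivAt (fun r => -ρ₂ * (v r * conj (y r)).re - ((b - b₀) * ρ₁ / k) * (z r * conj (u r)).re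
        + (b₀ * ρ₁ * ρ₃ / (k * δ)) * (θ r * conj (u r)).re)
      (K₁Rate ρ₁ ρ₂ ρ₃ k b b₀ m δ βt ξ (v t) (u t) (y t) (θ t) G) t := by
  refine ((((hasDerivAt_re_mul_conj hv hy).const_mul (-ρ₂)).sub
    ((hasDerivAt_re_mul_conj hz hu).const_mul ((b - b₀) * ρ₁ / k))).add
    ((hasDerivAt_re_mul_conj hθ hu).const_mul (b₀ * ρ₁ * ρ₃ / (k * δ)))).congr_deriv ?_
  simp only [K₁Rate, map_div₀, map_mul, map_add, map_sub, conj_I, conj_ofReal, Complex.sq_norm,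
    normSq_apply, mul_re, mul_im, add_re, add_im, sub_re, sub_im, neg_re, neg_im, I_re, I_im,
    ofReal_re, ofReal_im, conj_re, conj_im, div_ofReal_re, div_ofReal_im, ← ofReal_pow]
  field_simp
  ring

lemma K₁Rate_add_le (hk : 0 < k) (hm : 0 < m) (hδ : 0 < δ) (hρ₁ : 0 < ρ₁) (hρ₃ : 0 < ρ₃)
    (hβt : 0 < βt) (hb₀ : 0 ≤ b₀) {ε : ℝ} (hε : 0 < ε) (v u y θ G : ℂ) :
    K₁Rate ρ₁ ρ₂ ρ₃ k b b₀ m δ βt ξ v u y θ G + k * (1 - ε) * ‖v‖ ^ 2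
      ≤ ρ₂ * ‖y‖ ^ 2 + (ρ₂ - b * ρ₁ / k) * (I * ξ * conj u * y).re
        + (m ^ 2 + (δ + b₀ * ρ₃ / δ) ^ 2) / (2 * (k * ε)) * ξ ^ 2 * ‖θ‖ ^ 2
        + (m ^ 2 + (δ + b₀ * ρ₃ / δ) ^ 2) / (2 * (k * ε)) * ξ ^ 4 * ‖G‖ ^ 2
        + b₀ * βt * ρ₁ / (k * δ) * ξ ^ 2 * ‖θ‖ * ‖u‖ := by
  set A := δ + b₀ * ρ₃ / δ
  have hkε : 0 < k * ε := mul_pos hk hε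
  have hA : 0 ≤ A := by positivity
  have hIξ (w : ℂ) : ‖I * ξ * w‖ = |ξ| * ‖w‖ := by
    rw [norm_mul, norm_mul, norm_I, norm_real, Real.norm_eq_abs, one_mul]
  have hG : m * ξ ^ 2 * (v * conj G).re ≤ ‖v‖ * (m * ξ ^ 2 * ‖G‖) := by
    have h : (v * conj G).re ≤ ‖v‖ * ‖G‖ := by simpa using re_le_norm (v * conj G)
    linarith [mul_le_mul_of_nonneg_left h (by positivity : 0 ≤ m * ξ ^ 2)]
  have hθv : -δ * (I * ξ * v * conj θ).re - b₀ * ρ₃ / δ * (I * ξ * θ * conj v).re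
      ≤ ‖v‖ * (A * |ξ| * ‖θ‖) := by
    have h₁ := neg_re_mul_conj_le (I * ξ * v) θ
    have h₂ := neg_re_mul_conj_le (I * ξ * θ) v
    rw [hIξ] at h₁ h₂
    linarith [mul_le_mul_of_nonneg_left h₁ hδ.le,
      mul_le_mul_of_nonneg_left h₂ (by positivity : 0 ≤ b₀ * ρ₃ / δ)]
  have hθu : -(b₀ * βt * ρ₁ / (k * δ) * ξ ^ 2 * (θ * conj u).re)
      ≤ b₀ * βt * ρ₁ / (k * δ) * ξ ^ 2 * ‖θ‖ * ‖u‖ := by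
    linarith [mul_le_mul_of_nonneg_left (neg_re_mul_conj_le θ u)
      (by positivity : 0 ≤ b₀ * βt * ρ₁ / (k * δ) * ξ ^ 2)]
  have hYG := mul_le_half_mul_sq_add_sq_div hkε ‖v‖ (m * ξ ^ 2 * ‖G‖)
  have hYθ := mul_le_half_mul_sq_add_sq_div hkε ‖v‖ (A * |ξ| * ‖θ‖)
  have hCG : (m * ξ ^ 2 * ‖G‖) ^ 2 / (2 * (k * ε))
      ≤ (m ^ 2 + A ^ 2) / (2 * (k * ε)) * ξ ^ 4 * ‖G‖ ^ 2 := by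
    rw [div_mul_eq_mul_div, div_mul_eq_mul_div]
    gcongr
    nlinarith [sq_nonneg A, sq_nonneg (ξ ^ 2 * ‖G‖)]
  have hCθ : (A * |ξ| * ‖θ‖) ^ 2 / (2 * (k * ε))
      ≤ (m ^ 2 + A ^ 2) / (2 * (k * ε)) * ξ ^ 2 * ‖θ‖ ^ 2 := by
    rw [div_mul_eq_mul_div, div_mul_eq_mul_div, mul_pow, mul_pow, sq_abs]
    gcongr
    nlinarith [sq_nonneg m, sq_nonneg (ξ * ‖θ‖)]
  unfold K₁Rate
  linarith

end FourierLaw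

theorem stmt8_general (ρ₁ ρ₂ ρ₃ k b m δ βt k₁ k₂ b₀ : ℝ)
    (hρ₁ : 0 < ρ₁) (hρ₂ : 0 < ρ₂) (hρ₃ : 0 < ρ₃) (hk : 0 < k)
    (hm : 0 < m) (hδ : 0 < δ) (hβt : 0 < βt) :
    ∀ ε : ℝ, 0 < ε → ∃ C > 0, ∀ (ξ : ℝ) (g g' : ℝ → ℝ) (v u z y θ : ℝ → ℂ) (η ηt ηs : ℝ → ℝ → ℂ),
      (∀ s, 0 ≤ s → 0 ≤ g s) →
      (∀ s, 0 ≤ s → HasDerivAt g (g' s) s) →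
      (∀ s, 0 ≤ s → -k₁ * g s ≤ g' s ∧ g' s ≤ -k₂ * g s) →
      (b₀ = ∫ s in Set.Ici (0:ℝ), g s) →
      (∀ t, 0 ≤ t → HasDerivAt v (Complex.I * (ξ:ℂ) * u t - y t) t) →
      (∀ t, 0 ≤ t → HasDerivAt u (Complex.I * (k:ℂ) * (ξ:ℂ) * v t / (ρ₁:ℂ)) t) →
      (∀ t, 0 ≤ t → HasDerivAt z (Complex.I * (ξ:ℂ) * y t) t) →
      (∀ t, 0 ≤ t → HasDerivAt y ((Complex.I * ((b - b₀ : ℝ):ℂ) * (ξ:ℂ) * z t - (m:ℂ) * (ξ:ℂ)^2 * (∫ s in Set.Ici (0:ℝ), (g s : ℂ) * η t s) + (k:ℂ) * v t - Complex.I * (δ:ℂ) * (ξ:ℂ) * θ t) / (ρ₂:ℂ)) t) →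
      (∀ t, 0 ≤ t → HasDerivAt θ ((-((βt:ℂ) * (ξ:ℂ)^2 * θ t) - Complex.I * (δ:ℂ) * (ξ:ℂ) * y t) / (ρ₃:ℂ)) t) →
      (∀ t s, 0 ≤ t → 0 ≤ s → HasDerivAt (fun r => η r s) (ηt t s) t) →
      (∀ t s, 0 ≤ t → 0 ≤ s → HasDerivAt (fun r => η t r) (ηs t s) s) →
      (Continuous (Function.uncurry ηt)) →
      (Continuous (Function.uncurry ηs)) →
      (∀ t s, 0 ≤ t → 0 ≤ s → ηt t s + ηs t s = y t) →
      (∀ t, 0 ≤ t → η t 0 = 0) →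
      (∀ t, 0 ≤ t → MeasureTheory.IntegrableOn (fun s => g s * ‖η t s‖^2) (Set.Ici 0)) →
      (∀ t, 0 ≤ t → MeasureTheory.IntegrableOn (fun s => (g s : ℂ) * η t s) (Set.Ici 0)) →
      ∀ t, 0 ≤ t → ∃ d : ℝ,
        HasDerivAt (fun r => -ρ₂ * (v r * (starRingEnd ℂ) (y r)).re - ((b - b₀)*ρ₁/k) * (z r * (starRingEnd ℂ) (u r)).re + (b₀*ρ₁*ρ₃/(k*δ)) * (θ r * (starRingEnd ℂ) (u r)).re) d t ∧
        d + k*(1-ε)*‖v t‖^2 ≤ ρ₂*‖y t‖^2 + (ρ₂ - b*ρ₁/k) * (Complex.I * (ξ:ℂ) * (starRingEnd ℂ) (u t) * y t).re + C*ξ^2*‖θ t‖^2 + C*ξ^4*‖∫ s in Set.Ici (0:ℝ), (g s : ℂ) * η t s‖^2 + (b₀*βt*ρ₁/(k*δ))*ξ^2*‖θ t‖*‖u t‖ := by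
  intro ε hε
  refine ⟨(m ^ 2 + (δ + b₀ * ρ₃ / δ) ^ 2) / (2 * (k * ε)), by positivity, ?_⟩
  intro ξ g g' v u z y θ η ηt ηs hg _ _ hb₀ hv hu hz hy hθ _ _ _ _ _ _ _ _ t ht
  have hb₀_nonneg : 0 ≤ b₀ := hb₀ ▸ setIntegral_nonneg measurableSet_Ici hg
  exact ⟨_, hasDerivAt_K₁ hρ₁.ne' hρ₂.ne' hρ₃.ne' hk.ne' hδ.ne' (hv t ht) (hu t ht) (hz t ht)
    (hy t ht) (hθ t ht), K₁Rate_add_le hk hm hδ hρ₁ hρ₃ hβt hb₀_nonneg hε _ _ _ _ _⟩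

theorem stmt8 (ρ₁ ρ₂ ρ₃ k b m δ βt k₁ k₂ b₀ : ℝ)
    (hρ₁ : 0 < ρ₁) (hρ₂ : 0 < ρ₂) (hρ₃ : 0 < ρ₃) (hk : 0 < k) (hb : 0 < b)
    (hm : 0 < m) (hδ : 0 < δ) (hβt : 0 < βt)
    (hk₁₂ : k₂ ≤ k₁) (hk₂ : 0 < k₂) (ha : 0 < b - b₀) :
    ∀ ε : ℝ, 0 < ε → ∃ C > 0, ∀ (ξ : ℝ) (g g' : ℝ → ℝ) (v u z y θ : ℝ → ℂ) (η ηt ηs : ℝ → ℝ → ℂ),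
      (∀ s, 0 ≤ s → 0 ≤ g s) →
      (∀ s, 0 ≤ s → HasDerivAt g (g' s) s) →
      (∀ s, 0 ≤ s → -k₁ * g s ≤ g' s ∧ g' s ≤ -k₂ * g s) →
      (b₀ = ∫ s in Set.Ici (0:ℝ), g s) →
      (∀ t, 0 ≤ t → HasDerivAt v (Complex.I * (ξ:ℂ) * u t - y t) t) →
      (∀ t, 0 ≤ t → HasDerivAt u (Complex.I * (k:ℂ) * (ξ:ℂ) * v t / (ρ₁:ℂ)) t) →
      (∀ t, 0 ≤ t → HasDerivAt z (Complex.I * (ξ:ℂ) * y t) t) →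
      (∀ t, 0 ≤ t → HasDerivAt y ((Complex.I * ((b - b₀ : ℝ):ℂ) * (ξ:ℂ) * z t - (m:ℂ) * (ξ:ℂ)^2 * (∫ s in Set.Ici (0:ℝ), (g s : ℂ) * η t s) + (k:ℂ) * v t - Complex.I * (δ:ℂ) * (ξ:ℂ) * θ t) / (ρ₂:ℂ)) t) →
      (∀ t, 0 ≤ t → HasDerivAt θ ((-((βt:ℂ) * (ξ:ℂ)^2 * θ t) - Complex.I * (δ:ℂ) * (ξ:ℂ) * y t) / (ρ₃:ℂ)) t) →
      (∀ t s, 0 ≤ t → 0 ≤ s → HasDerivAt (fun r => η r s) (ηt t s) t) →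
      (∀ t s, 0 ≤ t → 0 ≤ s → HasDerivAt (fun r => η t r) (ηs t s) s) →
      (Continuous (Function.uncurry ηt)) →
      (Continuous (Function.uncurry ηs)) →
      (∀ t s, 0 ≤ t → 0 ≤ s → ηt t s + ηs t s = y t) →
      (∀ t, 0 ≤ t → η t 0 = 0) →
      (∀ t, 0 ≤ t → MeasureTheory.IntegrableOn (fun s => g s * ‖η t s‖^2) (Set.Ici 0)) →
      (∀ t, 0 ≤ t → MeasureTheory.IntegrableOn (fun s => (g s : ℂ) * η t s) (Set.Ici 0)) →
      ∀ t, 0 ≤ t → ∃ d : ℝ,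
        HasDerivAt (fun r => -ρ₂ * (v r * (starRingEnd ℂ) (y r)).re - ((b - b₀)*ρ₁/k) * (z r * (starRingEnd ℂ) (u r)).re + (b₀*ρ₁*ρ₃/(k*δ)) * (θ r * (starRingEnd ℂ) (u r)).re) d t ∧
        d + k*(1-ε)*‖v t‖^2 ≤ ρ₂*‖y t‖^2 + (ρ₂ - b*ρ₁/k) * (Complex.I * (ξ:ℂ) * (starRingEnd ℂ) (u t) * y t).re + C*ξ^2*‖θ t‖^2 + C*ξ^4*‖∫ s in Set.Ici (0:ℝ), (g s : ℂ) * η t s‖^2 + (b₀*βt*ρ₁/(k*δ))*ξ^2*‖θ t‖*‖u t‖ :=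
  stmt8_general ρ₁ ρ₂ ρ₃ k b m δ βt k₁ k₂ b₀ hρ₁ hρ₂ hρ₃ hk hm hδ hβt
end

section
/- Regularity-loss decay estimate from a pointwise Fourier bound, non-equal-speed case (Theorems 4.1(ii) and 4.2(ii) via Plancherel): let u₀ : ℝ → ℂ be integrable and square-integrable with Fourier transform û₀, let k, l be nonnegative integers with ∫_ℝ |ξ|^{2(k+l)}|û₀(ξ)|² dξ < ∞, and let û : [0,∞) × ℝ → ℂ be measurable with û(0,·) = û₀ and |û(t,ξ)|² ≤ M · exp(−λ·(ξ⁴/(1+ξ²)⁴)·t) · |û₀(ξ)|² for all t ≥ 0 and ξ ∈ ℝ, where M, λ > 0. Then there exists a constant C > 0, depending only on M, λ, k, l, such that for all t ≥ 0: (∫_ℝ |ξ|^{2k}|û(t,ξ)|² dξ)^{1/2} ≤ C(1+t)^{−1/8−k/4}·‖u₀‖_{L¹(ℝ)} + C(1+t)^{−l/4}·(∫_ℝ |ξ|^{2(k+l)}|û₀(ξ)|² dξ)^{1/2}. -/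
/-!
Split frequency space at `|ξ| = 1`. For `|ξ| ≤ 1` the rate `ρ(ξ) = ξ⁴/(1+ξ²)⁴` is at least
`ξ⁴/16`, so the weighted multiplier is dominated by a quartic Gaussian `exp(-c(1+t)ξ⁴)`; after
bounding `|û₀|` by `‖u₀‖_{L¹}`, scaling `ξ ↦ (1+t)^{-1/4} ξ` gives the rate `(1+t)^{-(2k+1)/4}`.
For `|ξ| ≥ 1` only `ρ(ξ) ≥ 1/(16ξ⁴)` is available, and the elementary bound
`(1+s)^a ≤ C_a e^s` trades `exp(-ct/ξ⁴)` for `|ξ|^{2l} (1+t)^{-l/2}`: decay is bought with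
`l` extra derivatives of `u₀` (regularity loss).
-/

open MeasureTheory Real

lemma one_add_rpow_le_mul_exp {a s : ℝ} (ha : 0 ≤ a) (hs : 0 ≤ s) :
    (1 + s) ^ a ≤ (1 + a) ^ a * exp s := by
  rcases ha.eq_or_lt with rfl | ha
  · simpa using one_le_exp hs
  have hbase : 1 + s ≤ (1 + a) * (1 + s / a) := by
    have : (1 + a) * (1 + s / a) = 1 + s + a + s / a := by field_simp; ring
    linarith [div_nonneg hs ha.le]
  calc (1 + s) ^ a ≤ ((1 + a) * (1 + s / a)) ^ a := by gcongr
    _ = (1 + a) ^ a * (1 + s / a) ^ a := mul_rpow (by positivity) (by positivity)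
    _ ≤ (1 + a) ^ a * exp (s / a) ^ a := by gcongr; linarith [add_one_le_exp (s / a)]
    _ = (1 + a) ^ a * exp s := by rw [← exp_mul, div_mul_cancel₀ s ha.ne']

lemma exp_neg_mul_div_le_mul_rpow_neg {c a w t : ℝ} (hc : 0 < c) (ha : 0 ≤ a) (hw : 1 ≤ w)
    (ht : 0 ≤ t) :
    exp (-(c * t / w)) ≤ ((1 + c⁻¹) * (1 + a)) ^ a * w ^ a * (1 + t) ^ (-a) := by
  set s := c * t / w
  have hs : 0 ≤ s := by positivity
  have hbase : 1 + t ≤ (1 + c⁻¹) * w * (1 + s) := by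
    have hws : w * s = c * t := mul_div_cancel₀ _ (by positivity)
    have : (1 + c⁻¹) * w * (1 + s) = w + w * c⁻¹ + c⁻¹ * (w * s) + w * s := by ring
    rw [this, hws, inv_mul_cancel_left₀ hc.ne']
    nlinarith [inv_pos.2 hc]
  have hpow : (1 + t) ^ a ≤ ((1 + c⁻¹) * w) ^ a * ((1 + a) ^ a * exp s) :=
    calc (1 + t) ^ a ≤ ((1 + c⁻¹) * w * (1 + s)) ^ a := by gcongr
      _ = ((1 + c⁻¹) * w) ^ a * (1 + s) ^ a := mul_rpow (by positivity) (by positivity)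
      _ ≤ _ := by gcongr; exact one_add_rpow_le_mul_exp ha hs
  rw [mul_rpow (by positivity) (by positivity)] at hpow
  rw [rpow_neg (by positivity), exp_neg, mul_rpow (by positivity) (by positivity),
    ← div_eq_mul_inv, le_div_iff₀ (by positivity), inv_mul_le_iff₀ (exp_pos s)]
  linarith

noncomputable def decayRate (ξ : ℝ) : ℝ := ξ ^ 4 / (1 + ξ ^ 2) ^ 4

lemma pow_four_div_sixteen_le_decayRate {ξ : ℝ} (hξ : |ξ| ≤ 1) : ξ ^ 4 / 16 ≤ decayRate ξ := by
  have hξ2 : ξ ^ 2 ≤ 1 := by nlinarith [sq_abs ξ, abs_nonneg ξ]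
  unfold decayRate
  gcongr
  calc (1 + ξ ^ 2) ^ 4 ≤ 2 ^ 4 := by gcongr; linarith
    _ = 16 := by norm_num

lemma inv_sixteen_mul_pow_four_le_decayRate {ξ : ℝ} (hξ : 1 ≤ |ξ|) :
    (16 * ξ ^ 4)⁻¹ ≤ decayRate ξ := by
  have hξ2 : 1 ≤ ξ ^ 2 := by nlinarith [sq_abs ξ, abs_nonneg ξ]
  have hξ4 : 0 < ξ ^ 4 := by nlinarith
  rw [decayRate, inv_eq_one_div, div_le_div_iff₀ (by positivity) (by positivity)]
  calc 1 * (1 + ξ ^ 2) ^ 4 ≤ (2 * ξ ^ 2) ^ 4 := by rw [one_mul]; gcongr; linarith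
    _ = ξ ^ 4 * (16 * ξ ^ 4) := by ring

lemma exp_neg_decayRate_le_of_abs_le_one {lam t ξ : ℝ} (hlam : 0 ≤ lam) (ht : 0 ≤ t)
    (hξ : |ξ| ≤ 1) :
    exp (-lam * decayRate ξ * t) ≤ exp (lam / 16) * exp (-(lam / 16 * (1 + t)) * ξ ^ 4) := by
  have hξ4 : ξ ^ 4 ≤ 1 := by
    rw [← Even.pow_abs ⟨2, rfl⟩ ξ]
    exact pow_le_one₀ (abs_nonneg ξ) hξ
  have hρ := mul_le_mul_of_nonneg_left (pow_four_div_sixteen_le_decayRate hξ) (mul_nonneg hlam ht)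
  rw [← exp_add, exp_le_exp]
  nlinarith

lemma exp_neg_decayRate_le_of_one_le_abs (l : ℕ) {lam t ξ : ℝ} (hlam : 0 < lam) (ht : 0 ≤ t)
    (hξ : 1 ≤ |ξ|) :
    exp (-lam * decayRate ξ * t)
      ≤ ((1 + (lam / 16)⁻¹) * (1 + l / 2)) ^ ((l : ℝ) / 2) * |ξ| ^ (2 * l)
        * (1 + t) ^ (-((l : ℝ) / 2)) := by
  have hξ4 : 1 ≤ ξ ^ 4 := by
    rw [← Even.pow_abs ⟨2, rfl⟩ ξ]
    exact one_le_pow₀ hξ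
  have hpow : (ξ ^ 4) ^ ((l : ℝ) / 2) = |ξ| ^ (2 * l) := by
    rw [show ξ ^ 4 = (|ξ| ^ 2) ^ (2 : ℝ) by rw [rpow_two, ← pow_mul, Even.pow_abs ⟨2, rfl⟩],
      ← rpow_mul (by positivity), mul_div_cancel₀ _ two_ne_zero, rpow_natCast, pow_mul]
  rw [← hpow]
  refine le_trans ?_ (exp_neg_mul_div_le_mul_rpow_neg (by positivity) (by positivity) hξ4 ht)
  have hρ := mul_le_mul_of_nonneg_left (inv_sixteen_mul_pow_four_le_decayRate hξ)
    (mul_nonneg hlam.le ht)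
  have : lam * t * (16 * ξ ^ 4)⁻¹ = lam / 16 * t / ξ ^ 4 := by field_simp
  rw [exp_le_exp]
  linarith

lemma exp_neg_decayRate_le (l : ℕ) {lam t : ℝ} (hlam : 0 < lam) (ht : 0 ≤ t) (ξ : ℝ) :
    exp (-lam * decayRate ξ * t)
      ≤ exp (lam / 16) * exp (-(lam / 16 * (1 + t)) * ξ ^ 4)
        + ((1 + (lam / 16)⁻¹) * (1 + l / 2)) ^ ((l : ℝ) / 2) * |ξ| ^ (2 * l)
          * (1 + t) ^ (-((l : ℝ) / 2)) := by
  rcases le_total |ξ| 1 with hξ | hξ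
  · exact (exp_neg_decayRate_le_of_abs_le_one hlam.le ht hξ).trans
      (le_add_of_nonneg_right (by positivity))
  · exact (exp_neg_decayRate_le_of_one_le_abs l hlam ht hξ).trans
      (le_add_of_nonneg_left (by positivity))

lemma integrable_abs_pow_mul_exp_neg_mul_pow_four (m : ℕ) {c : ℝ} (hc : 0 < c) :
    Integrable fun ξ : ℝ => |ξ| ^ m * exp (-c * ξ ^ 4) := by
  have hgauss : Integrable fun ξ : ℝ => |ξ| ^ m * exp (-c * ξ ^ 2) := by
    have := (integrable_rpow_mul_exp_neg_mul_sq hc (s := m)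
      (neg_one_lt_zero.trans_le m.cast_nonneg)).norm
    simpa only [rpow_natCast, norm_mul, norm_eq_abs, abs_pow, abs_exp] using this
  refine (hgauss.const_mul (exp c)).mono' (by fun_prop) (ae_of_all _ fun ξ => ?_)
  rw [norm_of_nonneg (by positivity), mul_left_comm, ← exp_add]
  gcongr
  nlinarith [sq_nonneg (ξ ^ 2 - 1)]

lemma integral_abs_pow_mul_exp_neg_mul_pow_four_scale (m : ℕ) (c : ℝ) {s : ℝ} (hs : 0 < s) :
    ∫ ξ : ℝ, |ξ| ^ m * exp (-(c * s) * ξ ^ 4)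
      = s ^ (-((m : ℝ) + 1) / 4) * ∫ ξ : ℝ, |ξ| ^ m * exp (-c * ξ ^ 4) := by
  set a := s ^ (4⁻¹ : ℝ)
  have ha : 0 < a := by positivity
  have ha4 : a ^ 4 = s := by
    rw [← rpow_natCast, ← rpow_mul hs.le]; norm_num
  have hscale := Measure.integral_comp_mul_left (fun ξ : ℝ => |ξ| ^ m * exp (-c * ξ ^ 4)) a
  simp only [abs_mul, mul_pow, abs_of_pos ha, ha4, abs_inv, smul_eq_mul] at hscale
  simp_rw [mul_assoc, ← mul_assoc (-c), neg_mul c s, integral_const_mul] at hscale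
  have hpow : s ^ (-((m : ℝ) + 1) / 4) = (a ^ (m + 1))⁻¹ := by
    rw [← rpow_natCast, ← rpow_neg ha.le, ← rpow_mul hs.le]
    push_cast
    ring_nf
  rw [hpow, pow_succ, eq_inv_mul_iff_mul_eq₀ (by positivity), mul_comm _ a, mul_assoc, hscale,
    mul_inv_cancel_left₀ ha.ne']

lemma integral_abs_pow_mul_norm_sq_le {E : Type*} [NormedAddCommGroup E] (k l : ℕ)
    {M c K N s : ℝ} (hM : 0 ≤ M) (hc : 0 < c) (hs : 0 < s) {F G : ℝ → E}
    (hG : ∀ ξ, ‖G ξ‖ ≤ N) (hGint : Integrable fun ξ : ℝ => |ξ| ^ (2 * (k + l)) * ‖G ξ‖ ^ 2)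
    (hF : ∀ ξ, ‖F ξ‖ ^ 2 ≤ M * (exp c * exp (-(c * s) * ξ ^ 4)
      + K * |ξ| ^ (2 * l) * s ^ (-((l : ℝ) / 2))) * ‖G ξ‖ ^ 2) :
    ∫ ξ, |ξ| ^ (2 * k) * ‖F ξ‖ ^ 2
      ≤ M * exp c * N ^ 2 * s ^ (-(((2 * k : ℕ) : ℝ) + 1) / 4)
          * (∫ ξ : ℝ, |ξ| ^ (2 * k) * exp (-c * ξ ^ 4))
        + M * K * s ^ (-((l : ℝ) / 2)) * ∫ ξ, |ξ| ^ (2 * (k + l)) * ‖G ξ‖ ^ 2 := by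
  set B := M * K * s ^ (-((l : ℝ) / 2))
  have hpt (ξ : ℝ) : |ξ| ^ (2 * k) * ‖F ξ‖ ^ 2
      ≤ M * exp c * N ^ 2 * (|ξ| ^ (2 * k) * exp (-(c * s) * ξ ^ 4))
        + B * (|ξ| ^ (2 * (k + l)) * ‖G ξ‖ ^ 2) :=
    calc |ξ| ^ (2 * k) * ‖F ξ‖ ^ 2
        ≤ |ξ| ^ (2 * k) * (M * (exp c * exp (-(c * s) * ξ ^ 4)
          + K * |ξ| ^ (2 * l) * s ^ (-((l : ℝ) / 2))) * ‖G ξ‖ ^ 2) := by gcongr; exact hF ξ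
      _ = M * exp c * ‖G ξ‖ ^ 2 * (|ξ| ^ (2 * k) * exp (-(c * s) * ξ ^ 4))
          + B * (|ξ| ^ (2 * (k + l)) * ‖G ξ‖ ^ 2) := by rw [mul_add 2 k l, pow_add]; ring
      _ ≤ _ := by gcongr; exact hG ξ
  have hgauss : Integrable fun ξ : ℝ => |ξ| ^ (2 * k) * exp (-(c * s) * ξ ^ 4) :=
    integrable_abs_pow_mul_exp_neg_mul_pow_four _ (by positivity)
  calc ∫ ξ, |ξ| ^ (2 * k) * ‖F ξ‖ ^ 2
      ≤ ∫ ξ, M * exp c * N ^ 2 * (|ξ| ^ (2 * k) * exp (-(c * s) * ξ ^ 4))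
          + B * (|ξ| ^ (2 * (k + l)) * ‖G ξ‖ ^ 2) :=
        integral_mono_of_nonneg (ae_of_all _ fun ξ => by positivity)
          ((hgauss.const_mul _).add (hGint.const_mul _)) (ae_of_all _ hpt)
    _ = _ := by
        rw [integral_add (hgauss.const_mul _) (hGint.const_mul _), integral_const_mul,
          integral_const_mul, integral_abs_pow_mul_exp_neg_mul_pow_four_scale _ _ hs]
        ring

lemma sqrt_le_mul_add_mul {x p q a b C : ℝ} (ha : 0 ≤ a) (hb : 0 ≤ b) (hC : 0 ≤ C)
    (hp : p ≤ C ^ 2) (hq : q ≤ C ^ 2) (h : x ≤ p * a ^ 2 + q * b ^ 2) :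
    √x ≤ C * a + C * b := by
  refine sqrt_le_iff.2 ⟨by positivity, ?_⟩
  nlinarith [mul_le_mul_of_nonneg_right hp (sq_nonneg a),
    mul_le_mul_of_nonneg_right hq (sq_nonneg b), mul_nonneg (mul_nonneg hC hC) (mul_nonneg ha hb)]

theorem stmt14 (k l : ℕ) (M lam : ℝ) (hM : 0 < M) (hlam : 0 < lam) :
    ∃ C > 0, ∀ (u₀ : ℝ → ℂ) (uhat : ℝ → ℝ → ℂ),
      MeasureTheory.Integrable u₀ →
      MeasureTheory.MemLp u₀ 2 →
      Measurable (Function.uncurry uhat) →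
      (∀ ξ : ℝ, uhat 0 ξ = FourierTransform.fourier u₀ ξ) →
      MeasureTheory.Integrable (fun ξ : ℝ => |ξ|^(2*(k+l)) * ‖FourierTransform.fourier u₀ ξ‖^2) →
      (∀ t, 0 ≤ t → ∀ ξ : ℝ, ‖uhat t ξ‖^2
          ≤ M * Real.exp (-lam * (ξ^4 / (1+ξ^2)^4) * t) * ‖FourierTransform.fourier u₀ ξ‖^2) →
      ∀ t, 0 ≤ t →
        Real.sqrt (∫ ξ : ℝ, |ξ|^(2*k) * ‖uhat t ξ‖^2)
          ≤ C * (1+t) ^ (-(1/8 : ℝ) - (k:ℝ)/4) * (∫ x : ℝ, ‖u₀ x‖)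
            + C * (1+t) ^ (-(l:ℝ)/4) * Real.sqrt (∫ ξ : ℝ, |ξ|^(2*(k+l)) * ‖FourierTransform.fourier u₀ ξ‖^2) := by
  set K := ((1 + (lam / 16)⁻¹) * (1 + l / 2)) ^ ((l : ℝ) / 2)
  set J := ∫ ξ : ℝ, |ξ| ^ (2 * k) * exp (-(lam / 16) * ξ ^ 4) with hJ_def
  have hJ : 0 ≤ J := integral_nonneg fun ξ => by positivity
  have hK : 0 ≤ K := by positivity
  have hC_sq : √(M * (exp (lam / 16) * J + K)) ^ 2 = M * (exp (lam / 16) * J + K) :=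
    sq_sqrt (by positivity)
  refine ⟨√(M * (exp (lam / 16) * J + K)), sqrt_pos.2 (by positivity), ?_⟩
  intro u₀ uhat _ _ _ _ hI hbound t ht
  have hmoment := integral_abs_pow_mul_norm_sq_le k l (c := lam / 16) (K := K) (s := 1 + t)
    (F := uhat t) (G := FourierTransform.fourier u₀) hM.le (by positivity) (by positivity)
    (fun ξ => VectorFourier.norm_fourierIntegral_le_integral_norm _ _ _ u₀ ξ) hI
    (fun ξ => (hbound t ht ξ).trans (by gcongr; exact exp_neg_decayRate_le l hlam ht ξ))
  rw [← hJ_def] at hmoment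
  rw [mul_assoc, mul_assoc]
  refine sqrt_le_mul_add_mul (p := M * exp (lam / 16) * J) (q := M * K) (by positivity)
    (by positivity) (sqrt_nonneg _) (by rw [hC_sq, mul_assoc]; gcongr; exact le_add_of_nonneg_right hK)
    (by rw [hC_sq]; gcongr; exact le_add_of_nonneg_left (by positivity)) (hmoment.trans_eq ?_)
  rw [mul_pow, mul_pow, sq_sqrt (integral_nonneg fun ξ => by positivity),
    ← rpow_mul_natCast (by positivity), ← rpow_mul_natCast (by positivity),
    show (-(1 / 8 : ℝ) - k / 4) * (2 : ℕ) = -(((2 * k : ℕ) : ℝ) + 1) / 4 by push_cast; ring,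
    show -(l : ℝ) / 4 * (2 : ℕ) = -((l : ℝ) / 2) by push_cast; ring]
  ring
end
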